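/- arXiv:1502.02290 — 2 statements merged into one kernel-verified Lean document; each statement's English description precedes it below -/
import Mathlib

section
/- Let S be a finite set, μ a probability distribution on S, h : S → {+1,−1}, and α ≥ 0. Let a read-once noisy decision tree on k variables be given by finite level sets C_0, C_1, …, C_k with C_0 a singleton, together with noisy query maps g_i : C_{i−1} × S → PMF(C_i) for i = 1,…,k. Let X_1, …, X_k be independent, each with distribution μ; the computation visits v_0 ∈ C_0 and then v_i is drawn from g_i(v_{i−1}, X_i), and outputs the leaf v_k ∈ C_k. Define f : S^k → {+1,−1} by f(x_1,…,x_k) = h(x_1)·h(x_2)⋯h(x_k). If for every i ∈ {1,…,k} and every v ∈ C_{i−1} the noisy function g_i(v,·) satisfies adv_{h,μ}(g_i(v,·)) ≤ α, then adv_{f,μ^k}(T) ≤ α^k, where T denotes the (randomized) map (x_1,…,x_k) ↦ v_k. -/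
/-- The advantage of a randomized map (Markov kernel) `A : S → PMF C` for
`f : S → {+1,-1}` under the distribution `μ` on the finite set `S`:
`adv_{f,μ}(A) = max_{a : C → [-1,1]} |E[f(X) a(A(X))]|`, where `X ∼ μ` and the
expectation is also over the internal randomness of `A`. -/
noncomputable def advPMF {S C : Type*} [Fintype S] [Fintype C]
    (μ : S → ℝ) (f : S → ℝ) (A : S → PMF C) : ℝ :=
  sSup {r : ℝ | ∃ a : C → ℝ, (∀ c, a c ∈ Set.Icc (-1 : ℝ) 1) ∧
    r = |∑ s, μ s * (f s * ∑ c, ((A s) c).toReal * a c)|}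

/-- The computation of a read-once noisy decision tree: starting from the root
`v0 : C 0`, the vertex `v (i+1)` at level `i+1` is drawn from the noisy query
`g i (v i) (y i)` applied to the `i`-th queried input `y i`.  The value at
level `i` is the distribution of the vertex reached at level `i`. -/
noncomputable def runNoisyTree {S : Type*} {C : ℕ → Type*}
    (g : (i : ℕ) → C i → S → PMF (C (i + 1))) (v0 : C 0) (y : ℕ → S) :
    (i : ℕ) → PMF (C i)
  | 0 => PMF.pure v0
  | i + 1 => (runNoisyTree g v0 y i).bind fun v => g i v (y i)

/-!
Peel off the last query. Since `X_k` is independent of the earlier inputs and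
`f(x) = f(x_{<k}) h(x_k)`, the correlation of the depth-`(k+1)` tree with a leaf test function `a`
equals the correlation of the depth-`k` tree with the test function
`b v = E[h(X) a(g_k(v, X))]`. The advantage bound on `g_k(v, ·)` gives `|b| ≤ α ‖a‖_∞`, so
induction on the depth gives `|E[f(X) a(T(X))]| ≤ α^k ‖a‖_∞`.
-/

open Finset

/-- `E[f(X) a(A(X))]` for `X ∼ μ`; `advPMF` is the supremum of its absolute value over
`a : C → [-1, 1]`. -/
noncomputable def correlation {S C : Type*} [Fintype S] [Fintype C]
    (μ f : S → ℝ) (A : S → PMF C) (a : C → ℝ) : ℝ :=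
  ∑ s, μ s * (f s * ∑ c, (A s c).toReal * a c)

namespace PMF

variable {C D : Type*} [Fintype C] [Fintype D]

theorem sum_toReal_eq_one (p : PMF C) : ∑ c, (p c).toReal = 1 := by
  rw [← ENNReal.toReal_sum fun c _ => p.apply_ne_top c, ← tsum_fintype (L := .unconditional _),
    p.tsum_coe, ENNReal.toReal_one]

theorem abs_sum_toReal_mul_le (p : PMF C) {a : C → ℝ} {M : ℝ} (ha : ∀ c, |a c| ≤ M) :
    |∑ c, (p c).toReal * a c| ≤ M :=
  calc |∑ c, (p c).toReal * a c| ≤ ∑ c, (p c).toReal * M := by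
        refine (abs_sum_le_sum_abs _ _).trans (sum_le_sum fun c _ => ?_)
        rw [abs_mul, ENNReal.abs_toReal]
        exact mul_le_mul_of_nonneg_left (ha c) ENNReal.toReal_nonneg
    _ = M := by rw [← sum_mul, p.sum_toReal_eq_one, one_mul]

theorem sum_bind_toReal_mul (p : PMF C) (q : C → PMF D) (a : D → ℝ) :
    ∑ d, (p.bind q d).toReal * a d = ∑ c, (p c).toReal * ∑ d, (q c d).toReal * a d := by
  simp only [bind_apply, tsum_fintype, mul_sum]
  rw [sum_comm]
  refine sum_congr rfl fun d _ => ?_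
  rw [ENNReal.toReal_sum fun c _ => ENNReal.mul_ne_top (p.apply_ne_top c) ((q c).apply_ne_top d),
    sum_mul]
  simp only [ENNReal.toReal_mul, mul_assoc]

end PMF

section correlation

variable {S C : Type*} [Fintype S] [Fintype C] (μ f : S → ℝ) (A : S → PMF C)

theorem correlation_smul (M : ℝ) (a : C → ℝ) :
    correlation μ f A (M • a) = M * correlation μ f A a := by
  simp only [correlation, Pi.smul_apply, smul_eq_mul, mul_sum]
  exact sum_congr rfl fun s _ => sum_congr rfl fun c _ => by ring

theorem abs_correlation_le_sum_abs {a : C → ℝ} (ha : ∀ c, |a c| ≤ 1) :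
    |correlation μ f A a| ≤ ∑ s, |μ s * f s| := by
  refine (abs_sum_le_sum_abs _ _).trans (sum_le_sum fun s _ => ?_)
  rw [← mul_assoc, abs_mul]
  exact mul_le_of_le_one_right (abs_nonneg _) ((A s).abs_sum_toReal_mul_le ha)

theorem abs_correlation_le_advPMF {a : C → ℝ} (ha : ∀ c, |a c| ≤ 1) :
    |correlation μ f A a| ≤ advPMF μ f A := by
  refine le_csSup ⟨∑ s, |μ s * f s|, ?_⟩ ⟨a, fun c => abs_le.mp (ha c), rfl⟩
  rintro r ⟨b, hb, rfl⟩
  exact abs_correlation_le_sum_abs μ f A fun c => abs_le.mpr (hb c)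

theorem abs_correlation_le_of_advPMF_le {α M : ℝ} (hA : advPMF μ f A ≤ α) (hM : 0 ≤ M)
    {a : C → ℝ} (ha : ∀ c, |a c| ≤ M) : |correlation μ f A a| ≤ α * M := by
  obtain rfl | hM := hM.eq_or_lt
  · have : a = 0 := funext fun c => abs_nonpos_iff.mp (ha c)
    simp [this, correlation]
  have hunit : ∀ c, |(M⁻¹ • a) c| ≤ 1 := fun c => by
    rw [Pi.smul_apply, smul_eq_mul, abs_mul, abs_inv, abs_of_pos hM]
    exact inv_mul_le_one_of_le₀ (ha c) hM.le
  calc |correlation μ f A a| = M * |correlation μ f A (M⁻¹ • a)| := by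
        conv_lhs => rw [← smul_inv_smul₀ hM.ne' a, correlation_smul, abs_mul, abs_of_pos hM]
    _ ≤ M * α := by gcongr; exact (abs_correlation_le_advPMF μ f A hunit).trans hA
    _ = α * M := mul_comm _ _

end correlation

theorem runNoisyTree_congr {S : Type*} {C : ℕ → Type*} (g : (i : ℕ) → C i → S → PMF (C (i + 1)))
    (v0 : C 0) {y y' : ℕ → S} {n : ℕ} (hy : ∀ i < n, y i = y' i) :
    runNoisyTree g v0 y n = runNoisyTree g v0 y' n := by
  induction n with
  | zero => rfl
  | succ n ih =>
    rw [runNoisyTree, runNoisyTree, ih fun i hi => hy i (hi.trans n.lt_succ_self),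
      hy n n.lt_succ_self]

section noisyTree

variable {S : Type*} [Nonempty S] {C : ℕ → Type*} (g : (i : ℕ) → C i → S → PMF (C (i + 1)))
  (v0 : C 0)

/-- The padding by `Classical.arbitrary S` is never read: level `k` only depends on the first `k`
inputs. -/
noncomputable def noisyTreeOn (k : ℕ) (x : Fin k → S) : PMF (C k) :=
  runNoisyTree g v0 (fun i => if hi : i < k then x ⟨i, hi⟩ else Classical.arbitrary S) k

theorem noisyTreeOn_snoc {k : ℕ} (x : Fin k → S) (s : S) :
    noisyTreeOn g v0 (k + 1) (Fin.snoc x s) = (noisyTreeOn g v0 k x).bind fun v => g k v s := by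
  have hinit : ∀ i < k, (if hi : i < k + 1 then (Fin.snoc x s : Fin (k + 1) → S) ⟨i, hi⟩
      else Classical.arbitrary S) = if hi : i < k then x ⟨i, hi⟩ else Classical.arbitrary S :=
    fun i hi => by
      rw [dif_pos (hi.trans k.lt_succ_self), dif_pos hi]
      exact Fin.snoc_castSucc (α := fun _ => S) s x ⟨i, hi⟩
  rw [noisyTreeOn, runNoisyTree, runNoisyTree_congr g v0 hinit, dif_pos k.lt_succ_self]
  exact congrArg _ (funext fun v => congrArg (g k v) (Fin.snoc_last (α := fun _ => S) s x))

variable [Fintype S] [∀ i, Fintype (C i)] (μ h : S → ℝ)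

theorem correlation_noisyTreeOn_succ (k : ℕ) (a : C (k + 1) → ℝ) :
    correlation (fun x : Fin (k + 1) → S => ∏ i, μ (x i)) (fun x => ∏ i, h (x i))
        (noisyTreeOn g v0 (k + 1)) a =
      correlation (fun x : Fin k → S => ∏ i, μ (x i)) (fun x => ∏ i, h (x i))
        (noisyTreeOn g v0 k) (fun v => correlation μ h (g k v) a) := by
  have hsnoc : ∀ p : S × (Fin k → S), Fin.snocEquiv (fun _ => S) p = Fin.snoc p.2 p.1 :=
    fun _ => rfl
  simp only [correlation]
  rw [← (Fin.snocEquiv fun _ => S).sum_comp, Fintype.sum_prod_type, sum_comm]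
  refine sum_congr rfl fun x _ => ?_
  simp only [hsnoc, Fin.prod_univ_castSucc, Fin.snoc_castSucc, Fin.snoc_last, noisyTreeOn_snoc,
    PMF.sum_bind_toReal_mul, mul_sum]
  rw [sum_comm]
  exact sum_congr rfl fun v _ => sum_congr rfl fun s _ => sum_congr rfl fun c _ => by ring

theorem abs_correlation_noisyTreeOn_le {α : ℝ} (hα : 0 ≤ α) (k : ℕ)
    (hg : ∀ i < k, ∀ v : C i, advPMF μ h (g i v) ≤ α) {M : ℝ} (hM : 0 ≤ M) {a : C k → ℝ}
    (ha : ∀ c, |a c| ≤ M) :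
    |correlation (fun x : Fin k → S => ∏ i, μ (x i)) (fun x => ∏ i, h (x i))
      (noisyTreeOn g v0 k) a| ≤ α ^ k * M := by
  induction k generalizing M with
  | zero =>
    classical
    simpa [correlation, noisyTreeOn, runNoisyTree, apply_ite ENNReal.toReal] using ha v0
  | succ k ih =>
    rw [correlation_noisyTreeOn_succ, pow_succ, mul_assoc]
    exact ih (fun i hi => hg i (hi.trans k.lt_succ_self)) (mul_nonneg hα hM) fun v =>
      abs_correlation_le_of_advPMF_le μ h (g k v) (hg k k.lt_succ_self v) hM ha

end noisyTree

theorem readOnce_noisy_tree_advantage_general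
    {S : Type*} [Fintype S] [Nonempty S] {k : ℕ}
    (μ : S → ℝ)
    (h : S → ℝ)
    (α : ℝ) (hα : 0 ≤ α)
    (C : ℕ → Type) [∀ i, Fintype (C i)]
    (v0 : C 0)
    (g : (i : ℕ) → C i → S → PMF (C (i + 1)))
    (hg : ∀ i, i < k → ∀ v : C i, advPMF μ h (g i v) ≤ α) :
    advPMF (fun x : Fin k → S => ∏ i, μ (x i)) (fun x => ∏ i, h (x i))
      (fun x => runNoisyTree g v0
        (fun i => if hi : i < k then x ⟨i, hi⟩ else Classical.arbitrary S) k)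
      ≤ α ^ k := by
  refine Real.sSup_le ?_ (pow_nonneg hα k)
  rintro r ⟨a, ha, rfl⟩
  exact (abs_correlation_noisyTreeOn_le g v0 μ h hα k hg zero_le_one fun c =>
    abs_le.mpr (ha c)).trans_eq (mul_one _)

/-- **Lemma `lem:read-once-tree-advantage` (advantage of read-once noisy
decision trees).**
Let `S` be a finite set, `μ` a probability distribution on `S`,
`h : S → {+1,-1}` and `α ≥ 0`.  Let a read-once noisy decision tree on `k`
variables be given by finite level sets `C 0, …, C k` with `C 0` a singleton
(with unique element `v0`) and noisy query maps `g i : C i → S → PMF (C (i+1))`.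
On independent inputs `X 1, …, X k ∼ μ` the tree starts at `v0` and draws
`v (i+1) ∼ g i (v i) (X i)`, outputting the leaf `v k`.  Let
`f(x₁,…,x_k) = h(x₁)⋯h(x_k)`.  If every noisy query `g i v` has advantage at
most `α` for `h` under `μ`, then the tree, viewed as a randomized map
`T : S^k → PMF (C k)`, has advantage at most `α ^ k` for `f` under `μ^k`. -/
theorem readOnce_noisy_tree_advantage
    {S : Type*} [Fintype S] [Nonempty S] {k : ℕ}
    (μ : S → ℝ) (hμ0 : ∀ s, 0 ≤ μ s) (hμ1 : ∑ s, μ s = 1)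
    (h : S → ℝ) (hh : ∀ s, h s = 1 ∨ h s = -1)
    (α : ℝ) (hα : 0 ≤ α)
    (C : ℕ → Type) [∀ i, Fintype (C i)]
    (v0 : C 0) (hv0 : ∀ w : C 0, w = v0)
    (g : (i : ℕ) → C i → S → PMF (C (i + 1)))
    (hg : ∀ i, i < k → ∀ v : C i, advPMF μ h (g i v) ≤ α) :
    advPMF (fun x : Fin k → S => ∏ i, μ (x i)) (fun x => ∏ i, h (x i))
      (fun x => runNoisyTree g v0
        (fun i => if hi : i < k then x ⟨i, hi⟩ else Classical.arbitrary S) k)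
      ≤ α ^ k :=
  readOnce_noisy_tree_advantage_general μ h α hα C v0 g hg
end

section
/- Let t be a positive integer, ε ∈ (0, 1/2), and γ = ε^t. There exists a randomized algorithm, i.e., a Markov kernel K : {0,1} → PMF({0,1}^t), with the following property: for each b ∈ {0,1}, if the input to K is a γ-noisy copy of b (equal to b with probability 1−γ and to 1−b with probability γ), then the output distribution (1−γ)·K(b) + γ·K(1−b) equals the product distribution on {0,1}^t in which each of the t coordinates independently equals b with probability 1−ε and equals 1−b with probability ε. -/
/-!
A `γ`-noisy input is the mixture `(1-γ)·K(b) + γ·K(¬b)`, an invertible linear map on the pair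
`(K(0), K(1))` when `γ ≠ 1/2`. Inverting it on the targets `μ₀, μ₁` (the `ε`-noisy product
distributions) gives `K(b) = ((1-γ)·μ_b - γ·μ_¬b) / (1-2γ)`, which sums to one automatically.
It is nonnegative because every atom of `μ_b` lies between `ε^t = γ` and `(1-ε)^t ≤ 1 - γ`.
-/

open Finset

section Unmix

variable {α : Type*}

/-- The solution `K(b)` of `(1-γ)·K(b) + γ·K(¬b) = p`, `γ·K(b) + (1-γ)·K(¬b) = q`. -/
noncomputable def unmix (γ : ℝ) (p q : α → ℝ) (y : α) : ℝ :=
  ((1 - γ) * p y - γ * q y) / (1 - 2 * γ)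

theorem mix_unmix {γ : ℝ} (hγ : 1 - 2 * γ ≠ 0) (p q : α → ℝ) (y : α) :
    (1 - γ) * unmix γ p q y + γ * unmix γ q p y = p y := by
  rw [unmix, unmix, mul_div_assoc', mul_div_assoc', ← add_div, div_eq_iff hγ]
  ring

theorem unmix_nonneg {γ : ℝ} (hγ : γ < 1 / 2) {p q : α → ℝ} {y : α}
    (h : γ * q y ≤ (1 - γ) * p y) : 0 ≤ unmix γ p q y :=
  div_nonneg (by linarith) (by linarith)

theorem sum_unmix [Fintype α] {γ : ℝ} (hγ : 1 - 2 * γ ≠ 0) {p q : α → ℝ}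
    (hp : ∑ y, p y = 1) (hq : ∑ y, q y = 1) : ∑ y, unmix γ p q y = 1 := by
  simp only [unmix, ← sum_div, sum_sub_distrib, ← mul_sum, hp, hq]
  rw [div_eq_one_iff_eq hγ]
  ring

theorem exists_kernel_mix_eq [Fintype α] {γ : ℝ} (hγ₀ : 0 ≤ γ) (hγ : γ < 1 / 2)
    (μ : Bool → α → ℝ) (hμ_sum : ∀ b, ∑ y, μ b y = 1)
    (hμ_ge : ∀ b y, γ ≤ μ b y) (hμ_le : ∀ b y, μ b y ≤ 1 - γ) :
    ∃ K : Bool → PMF α, ∀ b y,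
      (1 - γ) * (K b y).toReal + γ * (K (!b) y).toReal = μ b y := by
  have hγ' : 1 - 2 * γ ≠ 0 := by linarith
  have hK_nonneg : ∀ b y, 0 ≤ unmix γ (μ b) (μ !b) y := fun b y =>
    unmix_nonneg hγ (by nlinarith [hμ_ge b y, hμ_le (!b) y])
  have hK_sum : ∀ b, ∑ y, ENNReal.ofReal (unmix γ (μ b) (μ !b) y) = 1 := fun b => by
    rw [← ENNReal.ofReal_sum_of_nonneg fun y _ => hK_nonneg b y,
      sum_unmix hγ' (hμ_sum b) (hμ_sum !b), ENNReal.ofReal_one]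
  refine ⟨fun b => PMF.ofFintype _ (hK_sum b), fun b y => ?_⟩
  rw [PMF.ofFintype_apply, PMF.ofFintype_apply, ENNReal.toReal_ofReal (hK_nonneg b y),
    ENNReal.toReal_ofReal (hK_nonneg (!b) y), Bool.not_not]
  exact mix_unmix hγ' _ _ y

end Unmix

section NoisyCopies

variable {ι : Type*} [Fintype ι]

def noisyCopies (ε : ℝ) (b : Bool) (y : ι → Bool) : ℝ :=
  ∏ i, if y i = b then 1 - ε else ε

theorem sum_noisyCopies [DecidableEq ι] (ε : ℝ) (b : Bool) :
    ∑ y : ι → Bool, noisyCopies ε b y = 1 := by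
  refine (Fintype.prod_sum fun (_ : ι) (c : Bool) => if c = b then 1 - ε else ε).symm.trans ?_
  refine prod_eq_one fun _ _ => ?_
  cases b <;> simp

theorem pow_card_le_noisyCopies {ε : ℝ} (hε₀ : 0 ≤ ε) (hε : ε ≤ 1 / 2) (b : Bool)
    (y : ι → Bool) : ε ^ Fintype.card ι ≤ noisyCopies ε b y :=
  calc ε ^ Fintype.card ι = ∏ _i : ι, ε := by rw [prod_const, card_univ]
    _ ≤ noisyCopies ε b y := prod_le_prod (fun _ _ => hε₀) fun i _ => by split_ifs <;> linarith

theorem noisyCopies_le_pow_card {ε : ℝ} (hε₀ : 0 ≤ ε) (hε : ε ≤ 1 / 2) (b : Bool)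
    (y : ι → Bool) : noisyCopies ε b y ≤ (1 - ε) ^ Fintype.card ι :=
  calc noisyCopies ε b y ≤ ∏ _i : ι, (1 - ε) :=
        prod_le_prod (fun i _ => by split_ifs <;> linarith) fun i _ => by split_ifs <;> linarith
    _ = (1 - ε) ^ Fintype.card ι := by rw [prod_const, card_univ]

end NoisyCopies

theorem one_sub_pow_le_one_sub_pow {ε : ℝ} (hε₀ : 0 ≤ ε) (hε₁ : ε ≤ 1) {t : ℕ} (ht : t ≠ 0) :
    (1 - ε) ^ t ≤ 1 - ε ^ t := by
  linarith [pow_le_of_le_one (sub_nonneg.2 hε₁) (by linarith) ht,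
    pow_le_of_le_one hε₀ hε₁ ht]

/-- **Lemma 36 of Goyal–Kindler–Saks (noise regeneration).**
Let `t ≥ 1`, `ε ∈ (0, 1/2)` and `γ = ε^t`.  There is a randomized algorithm,
i.e. a Markov kernel `K : {0,1} → PMF({0,1}^t)`, such that for each bit `b`:
if the input to `K` is a `γ`-noisy copy of `b` (equal to `b` with probability
`1-γ` and to `¬b` with probability `γ`), then the output distribution
`(1-γ)·K(b) + γ·K(¬b)` is the product distribution on `{0,1}^t` in which each
of the `t` coordinates independently equals `b` with probability `1-ε` and
equals `¬b` with probability `ε`. -/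
theorem noise_regeneration (t : ℕ) (ht : 0 < t) (ε : ℝ)
    (hε : ε ∈ Set.Ioo (0 : ℝ) (1 / 2)) :
    ∃ K : Bool → PMF (Fin t → Bool), ∀ b : Bool, ∀ y : Fin t → Bool,
      (1 - ε ^ t) * ((K b) y).toReal + ε ^ t * ((K (!b)) y).toReal
        = ∏ i : Fin t, if y i = b then 1 - ε else ε := by
  obtain ⟨hε₀, hε₁⟩ := hε
  have hγ : ε ^ t < 1 / 2 := (pow_le_of_le_one hε₀.le (by linarith) ht.ne').trans_lt hε₁
  have hμ_ge (b : Bool) (y : Fin t → Bool) : ε ^ t ≤ noisyCopies ε b y := by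
    simpa using pow_card_le_noisyCopies hε₀.le hε₁.le b y
  have hμ_le (b : Bool) (y : Fin t → Bool) : noisyCopies ε b y ≤ 1 - ε ^ t :=
    (noisyCopies_le_pow_card hε₀.le hε₁.le b y).trans
      (by simpa using one_sub_pow_le_one_sub_pow hε₀.le (by linarith) ht.ne')
  exact exists_kernel_mix_eq (pow_nonneg hε₀.le t) hγ (noisyCopies ε) (sum_noisyCopies ε)
    hμ_ge hμ_le
end
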